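/- Let V be an FI-module, and suppose 0 → W → P → V → 0 is exact with P projective generated in degree ≤ hd_0(V). If hd_0(V) ≤ hd_1(V), then W is generated in degree ≤ hd_1(V). More generally hd_1(V) ≤ hd_0(W) ≤ max{hd_0(V), hd_1(V)}. -/

import Mathlib

/-!
Background for: W.L. Gan, "A long exact sequence for homology of FI-modules".

`FICat` is the category of finite sets and injections; an FI-module over a
commutative ring `k` is a functor `FICat ⥤ ModuleCat k`.  `Sfun` is the shift
functor, `iota` the canonical map `V ⟶ SV`, `Dfun` the derivative (cokernel of
`iota`), `Kfun` its kernel, `Ffunctor` the functor `V ↦ V/JV`, and `HF a` the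
FI-homology functor, i.e. the `a`-th left derived functor of `Ffunctor`.
-/

open CategoryTheory CategoryTheory.Limits

/-- The category `FI` of finite sets and injective maps. -/
structure FICat : Type 1 where
  carrier : Type
  [fintype : Fintype carrier]

attribute [instance] FICat.fintype

instance : Category.{0} FICat where
  Hom X Y := {f : X.carrier → Y.carrier // Function.Injective f}
  id X := ⟨id, fun _ _ h => h⟩
  comp f g := ⟨g.1 ∘ f.1, g.2.comp f.2⟩

/-- The category of FI-modules over `k`. -/
abbrev FIMod (k : Type) [CommRing k] := FICat ⥤ ModuleCat.{0} k

variable (k : Type) [CommRing k]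

/-- The finite set `{1, …, n}` as an object of `FI`. -/
def FIfin (n : ℕ) : FICat := ⟨Fin n⟩

/-- The self-embedding `X ↦ X ⊔ {⋆}` of `FI`. -/
def sigmaF : FICat ⥤ FICat where
  obj X := ⟨X.carrier ⊕ PUnit⟩
  map f := ⟨Sum.map f.1 id, f.2.sumMap Function.injective_id⟩
  map_id X := by apply Subtype.ext; funext x; cases x <;> rfl
  map_comp f g := by apply Subtype.ext; funext x; cases x <;> rfl

/-- The shift functor `S` on FI-modules: `(SV)_X = V_{X ⊔ {⋆}}`. -/
def Sfun : FIMod k ⥤ FIMod k := (Functor.whiskeringLeft _ _ _).obj (sigmaF)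

instance : (Sfun k).Additive where
  map_add := by intros; apply NatTrans.ext; funext X; rfl

/-- The inclusion `X ↪ X ⊔ {⋆}` in `FI`. -/
def inclStar (X : FICat) : X ⟶ (sigmaF).obj X := ⟨Sum.inl, Sum.inl_injective⟩

/-- The natural map `ι : V ⟶ SV`. -/
def iota (V : FIMod k) : V ⟶ (Sfun k).obj V where
  app X := V.map (inclStar X)
  naturality X Y f := by
    dsimp [Sfun]
    rw [← V.map_comp, ← V.map_comp]
    congr 1

lemma iota_natural {V W : FIMod k} (η : V ⟶ W) :
    iota k V ≫ (Sfun k).map η = η ≫ iota k W := by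
  apply NatTrans.ext; funext X
  exact (η.naturality (inclStar X))

/-- The derivative functor `D`, with `DV = coker(ι : V → SV)`. -/
noncomputable def Dfun : FIMod k ⥤ FIMod k where
  obj V := cokernel (iota k V)
  map {V W} η := cokernel.map _ _ η ((Sfun k).map η) (iota_natural k η)
  map_id V := by apply coequalizer.hom_ext; simp
  map_comp f g := by apply coequalizer.hom_ext; simp

/-- The kernel functor `K`, with `KV = ker(ι : V → SV)`. -/
noncomputable def Kfun : FIMod k ⥤ FIMod k where
  obj V := kernel (iota k V)
  map {V W} η := kernel.map _ _ η ((Sfun k).map η) (iota_natural k η)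
  map_id V := by apply equalizer.hom_ext; simp
  map_comp f g := by apply equalizer.hom_ext; simp

noncomputable instance : (Dfun k).Additive where
  map_add := by intros; apply coequalizer.hom_ext; simp [Dfun]; erw [Preadditive.comp_add]; simp

/-- `(JV)_X`: the submodule of `V_X` spanned by the images of `f_* : V_Y → V_X`
over all injections `f : Y → X` with `|Y| < |X|` (i.e., non-surjective `f`). -/
def Jsub (V : FIMod k) (X : FICat) : Submodule k (V.obj X) :=
  ⨆ (p : Σ Y : FICat, Y ⟶ X) (_ : ¬ Function.Surjective p.2.1),
    LinearMap.range (V.map p.2).hom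

lemma Jsub_comap {V : FIMod k} {X Y : FICat} (f : X ⟶ Y) :
    Jsub k V X ≤ (Jsub k V Y).comap (V.map f).hom := by
  apply iSup_le
  rintro ⟨Z, g⟩
  apply iSup_le
  intro hg
  rintro _ ⟨w, rfl⟩
  have h1 : (V.map f) ((V.map g) w) = V.map (g ≫ f) w := by
    rw [V.map_comp]; rfl
  have h2 : ¬ Function.Surjective (g ≫ f).1 := by
    intro hs
    apply hg
    intro x
    obtain ⟨z, hz⟩ := hs (f.1 x)
    exact ⟨z, f.2 hz⟩
  refine Submodule.mem_comap.2 ?_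
  rw [h1]
  exact Submodule.mem_iSup_of_mem ⟨Z, g ≫ f⟩ (Submodule.mem_iSup_of_mem h2 ⟨w, rfl⟩)

/-- The right exact functor `F : V ↦ V/JV` on FI-modules. -/
noncomputable def Ffunctor : FIMod k ⥤ FIMod k where
  obj V :=
  { obj := fun X => ModuleCat.of k (V.obj X ⧸ Jsub k V X)
    map := fun {X Y} f => ModuleCat.ofHom (Submodule.mapQ _ _ (V.map f).hom (Jsub_comap k f))
    map_id := fun X => by
      apply ModuleCat.hom_ext
      apply Submodule.linearMap_qext
      ext x
      simp [V.map_id]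
    map_comp := fun {X Y Z} f g => by
      apply ModuleCat.hom_ext
      apply Submodule.linearMap_qext
      ext x
      simp [V.map_comp] }
  map {V W} η :=
  { app := fun X => ModuleCat.ofHom (Submodule.mapQ _ _ (η.app X).hom
      (by
        apply iSup_le
        rintro ⟨Z, g⟩
        apply iSup_le
        intro hg
        rintro _ ⟨w, rfl⟩
        have h1 : (η.app X).hom ((V.map g).hom w) = (W.map g).hom ((η.app Z).hom w) :=
          congrArg (fun φ => φ.hom w) (η.naturality g)
        refine Submodule.mem_comap.2 ?_
        rw [h1]
        exact Submodule.mem_iSup_of_mem ⟨Z, g⟩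
          (Submodule.mem_iSup_of_mem hg ⟨_, rfl⟩)))
    naturality := fun {X Y} f => by
      apply ModuleCat.hom_ext
      apply Submodule.linearMap_qext
      ext x
      have h1 : (η.app Y).hom ((V.map f).hom x) = (W.map f).hom ((η.app X).hom x) :=
        congrArg (fun φ => φ.hom x) (η.naturality f)
      exact congrArg (Submodule.Quotient.mk) h1 }
  map_id V := by
    apply NatTrans.ext; funext X
    apply ModuleCat.hom_ext
    apply Submodule.linearMap_qext
    ext x
    rfl
  map_comp f g := by
    apply NatTrans.ext; funext X
    apply ModuleCat.hom_ext
    apply Submodule.linearMap_qext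
    ext x
    rfl

noncomputable instance : (Ffunctor k).Additive where
  map_add := by
    intros
    apply NatTrans.ext; funext X
    apply ModuleCat.hom_ext
    apply Submodule.linearMap_qext
    ext x
    rfl

section Homology

variable [EnoughProjectives (FIMod k)]

/-- The FI-homology functor `H_a`: the `a`-th left derived functor of `F`. -/
noncomputable def HF (a : ℕ) : FIMod k ⥤ FIMod k := (Ffunctor k).leftDerived a

/-- `H_a(V)_n`, the value of the FI-homology `H_a(V)` at `{1,…,n}`. -/
noncomputable def Hmod (a : ℕ) (V : FIMod k) (n : ℕ) : ModuleCat k :=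
  ((HF k a).obj V).obj (FIfin n)

/-- `hd_a(V) ≤ m` (with `m : ℤ`, so that `m = -1` means `H_a(V)` vanishes
in all degrees): the `a`-th homological degree is at most `m`. -/
def hdLE (a : ℕ) (V : FIMod k) (m : ℤ) : Prop :=
  ∀ n : ℕ, m < (n : ℤ) → Subsingleton (Hmod k a V n)

/-- `reg(V) ≤ c`: the Castelnuovo–Mumford regularity of `V` is at most `c`,
i.e. `hd_a(V) ≤ c + a` for all `a ≥ 1`. -/
def regLE (V : FIMod k) (c : ℤ) : Prop :=
  ∀ a : ℕ, 1 ≤ a → hdLE k a V (c + a)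

/-- An FI-module is zero iff it vanishes on every finite set. -/
def IsZeroMod (V : FIMod k) : Prop := ∀ X : FICat, Subsingleton (V.obj X)

/-- `V` is `F`-acyclic: `H_a(V) = 0` for all `a ≥ 1`. -/
def FAcyclic (V : FIMod k) : Prop :=
  ∀ a : ℕ, 1 ≤ a → IsZeroMod k ((HF k a).obj V)

/-- `V` is generated in degree `≤ kk` and related in degree `≤ d`: there is a
short exact sequence `0 → W → P → V → 0` with `P` projective generated in
degree `≤ kk` and `W` generated in degree `≤ d`. -/
def GenRel (V : FIMod k) (kk d : ℤ) : Prop :=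
  ∃ (W P : FIMod k) (f : W ⟶ P) (g : P ⟶ V) (w : f ≫ g = 0),
    Mono f ∧ Epi g ∧ (ShortComplex.mk f g w).Exact ∧
      Projective P ∧ hdLE k 0 P kk ∧ hdLE k 0 W d

end Homology

/-- `td(V) ≤ c`: any torsion element of `V_n` (killed by every injection
`[n] → [n+1]`) with `(n : ℤ) > c` is zero. -/
def tdLE (V : FIMod k) (c : ℤ) : Prop :=
  ∀ n : ℕ, c < (n : ℤ) → ∀ v : V.obj (FIfin n),
    (∀ f : FIfin n ⟶ FIfin (n + 1), V.map f v = 0) → v = 0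

/-- The `i`-th iterated shift `S^i V`. -/
noncomputable def Siter (i : ℕ) (V : FIMod k) : FIMod k := ((Sfun k).obj)^[i] V

namespace FIRelAux
universe v u v' u'
variable {A : Type u} [Category.{v} A] [Abelian A]

lemma exact_mono_postcomp {X1 X2 X3 X3' : A} (f : X1 ⟶ X2) (g : X2 ⟶ X3) (w : f ≫ g = 0)
    (h : (ShortComplex.mk f g w).Exact) (m : X3 ⟶ X3') [Mono m] :
    (ShortComplex.mk f (g ≫ m) (by rw [← Category.assoc, w, Limits.zero_comp])).Exact := by
  rw [ShortComplex.exact_iff_mono_cokernel_desc] at h ⊢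
  have heq : cokernel.desc f (g ≫ m) (by rw [← Category.assoc, w, Limits.zero_comp]) =
      cokernel.desc f g w ≫ m := by
    rw [← cancel_epi (cokernel.π f)]
    simp
  rw [heq]
  exact mono_comp _ _

noncomputable def spliceComplex {V W P : A} (f : W ⟶ P) (g : P ⟶ V)
    (Q : CategoryTheory.ProjectiveResolution W) : ChainComplex A ℕ :=
  ChainComplex.of
    (fun n => match n with | 0 => P | (n+1) => Q.complex.X n)
    (fun n => match n with | 0 => Q.π.f 0 ≫ f | (n+1) => Q.complex.d (n+1) n)
    (fun n => match n with
      | 0 => by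
          show Q.complex.d 1 0 ≫ Q.π.f 0 ≫ f = 0
          erw [CategoryTheory.ProjectiveResolution.complex_d_comp_π_f_zero_assoc, zero_comp]
      | (n+1) => by
          show Q.complex.d (n+2) (n+1) ≫ Q.complex.d (n+1) n = 0
          simp)

@[simp] lemma spliceComplex_d_one_zero {V W P : A} (f : W ⟶ P) (g : P ⟶ V)
    (Q : CategoryTheory.ProjectiveResolution W) :
    (spliceComplex f g Q).d 1 0 = Q.π.f 0 ≫ f := by
  dsimp only [spliceComplex]
  erw [ChainComplex.of_d]

@[simp] lemma spliceComplex_d_succ {V W P : A} (f : W ⟶ P) (g : P ⟶ V)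
    (Q : CategoryTheory.ProjectiveResolution W) (n : ℕ) :
    (spliceComplex f g Q).d (n+2) (n+1) = Q.complex.d (n+1) n := by
  dsimp only [spliceComplex]
  erw [ChainComplex.of_d]

noncomputable def spliceResolution {V W P : A} (f : W ⟶ P) (g : P ⟶ V) (w : f ≫ g = 0)
    (hf : Mono f) (hg : Epi g) (hex : (ShortComplex.mk f g w).Exact) (hP : Projective P)
    (Q : CategoryTheory.ProjectiveResolution W) :
    CategoryTheory.ProjectiveResolution V where
  complex := spliceComplex f g Q
  projective n := match n with
    | 0 => hP
    | (n+1) => Q.projective n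
  π := (ChainComplex.toSingle₀Equiv _ _).symm
    ⟨g, by rw [spliceComplex_d_one_zero]; erw [Category.assoc, w, comp_zero]⟩
  quasiIso := ⟨fun n => by
    have hπ0 : ((ChainComplex.toSingle₀Equiv (spliceComplex f g Q) V).symm
        ⟨g, by rw [spliceComplex_d_one_zero]; erw [Category.assoc, w, comp_zero]⟩).f 0 = g :=
      ChainComplex.toSingle₀Equiv_symm_apply_f_zero _ _
    match n with
    | 0 =>
      rw [ChainComplex.quasiIsoAt₀_iff, ShortComplex.quasiIso_iff_of_zeros']
      · haveI : Epi (Q.π.f 0) := epi_of_isColimit_cofork Q.isColimitCokernelCofork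
        have hE : (ShortComplex.mk (Q.π.f 0 ≫ f) g
            (by erw [Category.assoc, w, comp_zero])).Exact := by
          have h2 := hex
          rw [ShortComplex.exact_iff_epi_kernel_lift] at h2 ⊢
          have heq : kernel.lift g (Q.π.f 0 ≫ f) (by erw [Category.assoc, w, comp_zero]) =
              Q.π.f 0 ≫ kernel.lift g f w := by
            rw [← cancel_mono (kernel.ι g)]; simp; erw [Category.assoc, kernel.lift_ι]
          rw [heq]
          haveI : Epi (kernel.lift g f w) := h2
          exact @epi_comp _ _ _ _ _ _ inferInstance _ this
        refine (ShortComplex.exact_and_epi_g_iff_of_iso ?_).2 ⟨hE, hg⟩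
        exact ShortComplex.isoMk (Iso.refl _) (Iso.refl _) (Iso.refl _)
          (by simp; erw [Category.id_comp, Category.comp_id]) (by erw [Category.id_comp, Category.comp_id]; exact hπ0.symm)
      · rfl
      · rfl
      · rfl
    | (n+1) =>
      rw [quasiIsoAt_iff_exactAt' _ _ (ChainComplex.exactAt_succ_single_obj _ _)]
      rw [HomologicalComplex.exactAt_iff' _ (n+2) (n+1) n (by simp) (by simp)]
      match n with
      | 0 =>
        refine (ShortComplex.exact_iff_of_iso ?_).2
          (@exact_mono_postcomp _ _ _ _ _ _ _ _ _ _ Q.exact₀ f hf)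
        exact ShortComplex.isoMk (Iso.refl _) (Iso.refl _) (Iso.refl _)
          (by simp; erw [Category.id_comp, Category.comp_id]) (by simp; erw [Category.id_comp, Category.comp_id])
      | (n+1) =>
        refine (ShortComplex.exact_iff_of_iso ?_).2 (Q.exact_succ n)
        exact ShortComplex.isoMk (Iso.refl _) (Iso.refl _) (Iso.refl _)
          (by simp; erw [Category.id_comp, Category.comp_id]) (by simp; erw [Category.id_comp, Category.comp_id])⟩

variable [EnoughProjectives A] {B : Type u'} [Category.{v'} B] [Abelian B]

/-- The key homological input: there is an exact sequence
`0 → L₁F(V) → L₀F(W) → L₀F(P)` extracted from a presentation `0 → W → P → V → 0`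
with `P` projective. -/
theorem derived_seq (F : A ⥤ B) [F.Additive]
    {V W P : A} (f : W ⟶ P) (g : P ⟶ V) (w : f ≫ g = 0)
    (hf : Mono f) (hg : Epi g) (hex : (ShortComplex.mk f g w).Exact) (hP : Projective P) :
    ∃ (H O : B) (α : H ⟶ O) (β : O ⟶ (F.leftDerived 0).obj P) (z : α ≫ β = 0),
      Mono α ∧ (ShortComplex.mk α β z).Exact ∧
        Nonempty ((F.leftDerived 1).obj V ≅ H) ∧ Nonempty ((F.leftDerived 0).obj W ≅ O) := by
  haveI := hP
  obtain ⟨Q⟩ := (HasProjectiveResolution.out (Z := W))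
  let R := spliceResolution f g w hf hg hex hP Q
  let G := (F.mapHomologicalComplex (ComplexShape.down ℕ)).obj R.complex
  let GQ := (F.mapHomologicalComplex (ComplexShape.down ℕ)).obj Q.complex
  have T2 : IsIso (F.fromLeftDerivedZero.app P) := inferInstance
  let β : G.opcycles 1 ⟶ (F.leftDerived 0).obj P :=
    G.fromOpcycles 1 0 ≫ @inv _ _ _ _ _ T2
  have hz : G.homologyι 1 ≫ β = 0 := by
    rw [← Category.assoc, HomologicalComplex.homologyι_comp_fromOpcycles, zero_comp]
  have hE : (ShortComplex.mk (G.homologyι 1) (G.fromOpcycles 1 0)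
      (HomologicalComplex.homologyι_comp_fromOpcycles _ 1 0)).Exact :=
    ShortComplex.exact_of_f_is_kernel _ (HomologicalComplex.homologyIsKernel _ 1 0 (by simp))
  have hdd : GQ.d 1 0 = G.d 2 1 := by
    show F.map (Q.complex.d 1 0) = F.map ((spliceComplex f g Q).d 2 1)
    rw [spliceComplex_d_succ]
    rfl
  refine ⟨G.homology 1, G.opcycles 1, G.homologyι 1, β, hz, inferInstance,
    @exact_mono_postcomp _ _ _ _ _ _ _ _ _ _ hE _
      (@IsIso.mono_of_iso _ _ _ _ _ (@IsIso.inv_isIso _ _ _ _ _ T2)), ⟨R.isoLeftDerivedObj F 1⟩, ⟨?_⟩⟩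
  exact Q.isoLeftDerivedObj F 0 ≪≫ ChainComplex.isoHomologyι₀ _ ≪≫
    ((GQ.opcyclesIsCokernel 1 0 (by simp)).coconePointUniqueUpToIso (colimit.isColimit _)) ≪≫
    cokernelIsoOfEq hdd ≪≫
    ((G.opcyclesIsCokernel 2 1 (by simp)).coconePointUniqueUpToIso (colimit.isColimit _)).symm


variable {k : Type} [CommRing k]

lemma subsingleton_of_mono {M N : ModuleCat.{0} k} (φ : M ⟶ N) (h : Mono φ)
    (hN : Subsingleton N) : Subsingleton M := by
  have hinj := (ModuleCat.mono_iff_injective φ).1 h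
  exact ⟨fun a b => hinj (Subsingleton.elim _ _)⟩

lemma subsingleton_of_exact (S : ShortComplex (ModuleCat.{0} k)) (h : S.Exact)
    (h1 : Subsingleton S.X₁) (h3 : Subsingleton S.X₃) : Subsingleton S.X₂ := by
  rw [S.moduleCat_exact_iff] at h
  refine ⟨fun a b => ?_⟩
  obtain ⟨y, hy⟩ := h (a - b) (Subsingleton.elim _ _)
  have : y = 0 := Subsingleton.elim _ _
  rw [this, map_zero] at hy
  exact sub_eq_zero.1 hy.symm

lemma subsingleton_of_iso {M N : ModuleCat.{0} k} (e : M ≅ N) (h : Subsingleton M) :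
    Subsingleton N :=
  haveI := h
  e.toLinearEquiv.toEquiv.symm.subsingleton


end FIRelAux

/-- For a presentation `0 → W → P → V → 0` with `P` projective generated in
degree `≤ hd₀(V)`: `hd₁(V) ≤ hd₀(W) ≤ max{hd₀(V), hd₁(V)}`; in particular if
`hd₀(V) ≤ hd₁(V)` then `W` is generated in degree `≤ hd₁(V)`. -/



theorem FI_relation_degree_bounds (k : Type) [CommRing k]
    [CategoryTheory.EnoughProjectives (FIMod k)] (V W P : FIMod k)
    (f : W ⟶ P) (g : P ⟶ V) (w : f ≫ g = 0) (hf : Mono f) (hg : Epi g)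
    (hex : (ShortComplex.mk f g w).Exact) (hP : Projective P)
    (hPgen : ∀ m : ℤ, hdLE k 0 V m → hdLE k 0 P m) :
    (∀ m : ℤ, hdLE k 0 W m → hdLE k 1 V m) ∧
      (∀ m : ℤ, hdLE k 0 V m → hdLE k 1 V m → hdLE k 0 W m) ∧
      ((∀ m : ℤ, hdLE k 1 V m → hdLE k 0 V m) →
        ∀ m : ℤ, hdLE k 1 V m → hdLE k 0 W m) := by
  haveI := hP
  obtain ⟨H, O, α, β, z, hmono, hE, ⟨e1⟩, ⟨e0⟩⟩ :=
    FIRelAux.derived_seq (Ffunctor k) f g w hf hg hex hP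
  have key1 : ∀ n : ℕ, Subsingleton (Hmod k 0 W n) → Subsingleton (Hmod k 1 V n) := by
    intro n hs
    let ev := (evaluation FICat (ModuleCat.{0} k)).obj (FIfin n)
    haveI := hmono
    haveI : Mono (ev.map α) := inferInstance
    have hO : Subsingleton (O.obj (FIfin n)) :=
      FIRelAux.subsingleton_of_iso (ev.mapIso e0) hs
    have hH : Subsingleton (H.obj (FIfin n)) :=
      FIRelAux.subsingleton_of_mono (ev.map α) inferInstance hO
    exact FIRelAux.subsingleton_of_iso (ev.mapIso e1.symm) hH
  have key2 : ∀ n : ℕ, Subsingleton (Hmod k 1 V n) → Subsingleton (Hmod k 0 P n) →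
      Subsingleton (Hmod k 0 W n) := by
    intro n h1 hp
    let ev := (evaluation FICat (ModuleCat.{0} k)).obj (FIfin n)
    have hEx : ((ShortComplex.mk α β z).map ev).Exact := hE.map ev
    have hX1 : Subsingleton (((ShortComplex.mk α β z).map ev).X₁) :=
      FIRelAux.subsingleton_of_iso (ev.mapIso e1) h1
    have hX3 : Subsingleton (((ShortComplex.mk α β z).map ev).X₃) := hp
    have hO : Subsingleton (O.obj (FIfin n)) :=
      FIRelAux.subsingleton_of_exact _ hEx hX1 hX3
    exact FIRelAux.subsingleton_of_iso (ev.mapIso e0.symm) hO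
  refine ⟨?_, ?_, ?_⟩
  · intro m hm n hn
    exact key1 n (hm n hn)
  · intro m h0 h1 n hn
    exact key2 n (h1 n hn) (hPgen m h0 n hn)
  · intro himp m h1 n hn
    exact key2 n (h1 n hn) (hPgen m (himp m h1) n hn)
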